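/- Let Ψ be an instance of {1,2}-CSP whose constraint graph G is bipartite. Then P_∞ ⊨ Ψ if and only if G contains no bad walk. -/

import Mathlib

namespace CountingCSP

/-! ## The basic framework

An instance `Ψ` of `{1,2}`-CSP is modelled by a number `m` of variables, the variable set
being `Fin m` with its natural linear order `<` (the order of quantification `≺`), a function
`β : Fin m → ℕ` taking values in `{1,2}` (variable `v` is quantified by `∃^{≥ β v}`), and a
simple graph `G` on `Fin m` (the constraint graph).  A target graph is a type `B` together
with an adjacency relation `E : B → B → Prop` (loops allowed in general). -/

/-- Adjacency of the finite path `P_n` on the vertices `{1,…,n}`, modelled as `Fin n`. -/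
def pathAdj (n : ℕ) (i j : Fin n) : Prop :=
  (i : ℕ) + 1 = j ∨ (j : ℕ) + 1 = i

/-- Adjacency of the infinite path `P_∞` on `ℤ`: `i` and `j` adjacent iff `|i - j| = 1`. -/
def intPathAdj (i j : ℤ) : Prop := |i - j| = 1

/-- `SatFrom β G E i f` : processing the variables of the instance in `≺`-increasing order
starting from variable `i`, where the earlier variables have been assigned according to `f`,
the instance can be satisfied.  At each variable `v` one asks for a set `S` of `β v` distinct
elements of the target such that for every `b ∈ S` the rest of the instance can be satisfied
with `v ↦ b`; when all variables are assigned, the assignment must be a homomorphism. -/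
def SatFrom {m : ℕ} {B : Type*} (β : Fin m → ℕ) (G : SimpleGraph (Fin m))
    (E : B → B → Prop) (i : ℕ) (f : Fin m → B) : Prop :=
  if h : i < m then
    ∃ S : Finset B, S.card = β ⟨i, h⟩ ∧
      ∀ b ∈ S, SatFrom β G E (i + 1) (Function.update f ⟨i, h⟩ b)
  else ∀ u v : Fin m, G.Adj u v → E (f u) (f v)
termination_by m - i
decreasing_by omega

/-- `Sat β G E` : the instance with quantifiers `β` and constraint graph `G` is satisfied by
the target graph with adjacency `E`  (i.e. `H ⊨ Ψ`).  The initial assignment is irrelevant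
since every variable is assigned before it is used. -/
def Sat {m : ℕ} {B : Type*} (β : Fin m → ℕ) (G : SimpleGraph (Fin m))
    (E : B → B → Prop) : Prop :=
  ∀ f : Fin m → B, SatFrom β G E 0 f

/-- A graph is bipartite iff it has a proper 2-colouring. -/
def Bipartite {V : Type*} (G : SimpleGraph V) : Prop :=
  ∃ c : V → Bool, ∀ u v, G.Adj u v → c u ≠ c v

/-! ## Walks, looping walks, and the distance function δ -/

/-- `λ(Q) = |Q| − 2·∑_{interior vertices x of Q} (β x − 1)`, where `|Q|` is the length
(number of edges) of the walk `Q = x₁,…,x_r`, and the interior vertices are `x₂,…,x_{r−1}`. -/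
def lamWalk {m : ℕ} (β : Fin m → ℕ) (Q : List (Fin m)) : ℤ :=
  ((Q.length : ℤ) - 1) - 2 * (((Q.drop 1).dropLast).map (fun x => (β x : ℤ) - 1)).sum

/-- Looping walks of `G` (with respect to the quantification order `<` on `Fin m`):
a walk `x₁,…,x_r` with `x₁ ≠ x_r` such that if `r ≥ 3` then both endpoints strictly precede
every interior vertex and the walk splits at some interior position into two looping walks. -/
inductive IsLoopingWalk {m : ℕ} (G : SimpleGraph (Fin m)) : List (Fin m) → Prop
  | base {x y : Fin m} : G.Adj x y → IsLoopingWalk G [x, y]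
  | comb {x y z : Fin m} {Q₁ Q₂ : List (Fin m)} :
      IsLoopingWalk G (x :: (Q₁ ++ [y])) →
      IsLoopingWalk G (y :: (Q₂ ++ [z])) →
      x ≠ z →
      (∀ w ∈ Q₁ ++ y :: Q₂, x < w ∧ z < w) →
      IsLoopingWalk G (x :: (Q₁ ++ y :: Q₂ ++ [z]))

/-- `Q` is a looping walk between `u` and `v` (in either direction). -/
def LoopingWalkBetween {m : ℕ} (G : SimpleGraph (Fin m)) (u v : Fin m)
    (Q : List (Fin m)) : Prop :=
  IsLoopingWalk G Q ∧
    ((Q.head? = some u ∧ Q.getLast? = some v) ∨ (Q.head? = some v ∧ Q.getLast? = some u))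

/-- `IsDelta G β u v d` : `d = δ(u,v)`, i.e. `d` is the minimum of `λ(Q)` over all looping
walks `Q` of `G` between `u` and `v`.  (`δ(u,v) < ∞` corresponds to `∃ d, IsDelta G β u v d`.) -/
def IsDelta {m : ℕ} (G : SimpleGraph (Fin m)) (β : Fin m → ℕ) (u v : Fin m) (d : ℤ) : Prop :=
  (∃ Q, LoopingWalkBetween G u v Q ∧ lamWalk β Q = d) ∧
    ∀ Q, LoopingWalkBetween G u v Q → d ≤ lamWalk β Q

/-! ## The functions γ and γ′ -/

/-- `IsGammaVal G β g v t` : `t = max(0, max_{u ≺ v, δ(u,v) < ∞} (g u − δ(u,v) + β v − 1))`. -/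
def IsGammaVal {m : ℕ} (G : SimpleGraph (Fin m)) (β : Fin m → ℕ) (g : Fin m → ℤ)
    (v : Fin m) (t : ℤ) : Prop :=
  0 ≤ t ∧
  (∀ u, u < v → ∀ d, IsDelta G β u v d → g u - d + (β v : ℤ) - 1 ≤ t) ∧
  (t = 0 ∨ ∃ u, u < v ∧ ∃ d, IsDelta G β u v d ∧ t = g u - d + (β v : ℤ) - 1)

/-- `g` is the function `γ`: `γ(v) = 0` for the `≺`-least vertex, and otherwise
`γ(v) = β(v) − 1 + max(0, max_{u ≺ v, δ(u,v) < ∞} (γ(u) − δ(u,v) + β(v) − 1))`. -/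
def IsGamma {m : ℕ} (G : SimpleGraph (Fin m)) (β : Fin m → ℕ) (g : Fin m → ℤ) : Prop :=
  ∀ v : Fin m,
    if (v : ℕ) = 0 then g v = 0
    else ∃ t, IsGammaVal G β g v t ∧ g v = (β v : ℤ) - 1 + t

/-- `g` is the function `γ′`:
`γ′(v) = β(v) − 1 + max(0, max_{u ≺ v, δ(u,v) < ∞} (γ′(u) − δ(u,v) + β(v) − 1))`
(so `γ′(v) = β(v) − 1` for the `≺`-least vertex). -/
def IsGamma' {m : ℕ} (G : SimpleGraph (Fin m)) (β : Fin m → ℕ) (g : Fin m → ℤ) : Prop :=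
  ∀ v : Fin m, ∃ t, IsGammaVal G β g v t ∧ g v = (β v : ℤ) - 1 + t

/-! ## The closure sets (F, R⁺, R⁻) for the {2}-CSP(K₄) algorithm -/

mutual
/-- Membership in the closure set `F` of pairs (initialised as the edge set of `G`). -/
inductive InF {m : ℕ} (G : SimpleGraph (Fin m)) : Finset (Fin m) → Prop
  | edge {x y : Fin m} : G.Adj x y → InF G {x, y}
  | x3a {x y w z : Fin m} : [x, y, w, z].Pairwise (· ≠ ·) →
      x < z → y < z → w < z → ¬(x < w ∧ y < w) →
      InF G {w, z} → InRp G {x, y, z} → InF G {x, w}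
  | x3b {x y w z : Fin m} : [x, y, w, z].Pairwise (· ≠ ·) →
      x < z → y < z → w < z → ¬(x < w ∧ y < w) →
      InF G {w, z} → InRp G {x, y, z} → InF G {y, w}
  | x4 {x y w z : Fin m} : [x, y, w, z].Pairwise (· ≠ ·) →
      x < y → w < y → y < z →
      InRp G {x, y, z} → InRm G {w, y, z} → InF G {x, w}
  | x7a {x y q w z : Fin m} : [x, y, q, w, z].Pairwise (· ≠ ·) →
      x < q → y < q → w < q → q < z → ¬(x < w ∧ y < w) →
      InRp G {x, y, z} → InRm G {w, q, z} → InF G {x, w}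
  | x7a' {x y q w z : Fin m} : [x, y, q, w, z].Pairwise (· ≠ ·) →
      x < q → y < q → w < q → q < z → ¬(x < w ∧ y < w) →
      InRm G {x, y, z} → InRp G {w, q, z} → InF G {x, w}
  | x7b {x y q w z : Fin m} : [x, y, q, w, z].Pairwise (· ≠ ·) →
      x < q → y < q → w < q → q < z → ¬(x < w ∧ y < w) →
      InRp G {x, y, z} → InRm G {w, q, z} → InF G {y, w}
  | x7b' {x y q w z : Fin m} : [x, y, q, w, z].Pairwise (· ≠ ·) →
      x < q → y < q → w < q → q < z → ¬(x < w ∧ y < w) →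
      InRm G {x, y, z} → InRp G {w, q, z} → InF G {y, w}

/-- Membership in the closure set `R⁺` of triples. -/
inductive InRp {m : ℕ} (G : SimpleGraph (Fin m)) : Finset (Fin m) → Prop
  | x2 {x y w z : Fin m} : [x, y, w, z].Pairwise (· ≠ ·) →
      x < z → y < z → w < z →
      InF G {w, z} → InRm G {x, y, z} → InRp G {x, y, w}
  | x4 {x y w z : Fin m} : [x, y, w, z].Pairwise (· ≠ ·) →
      x < y → w < y → y < z →
      InRp G {x, y, z} → InRm G {w, y, z} → InRp G {x, y, w}
  | x5p {x y w z : Fin m} : [x, y, w, z].Pairwise (· ≠ ·) →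
      x < z → y < z → w < z →
      InRp G {x, y, z} → InRp G {w, y, z} → InRp G {x, y, w}
  | x5m {x y w z : Fin m} : [x, y, w, z].Pairwise (· ≠ ·) →
      x < z → y < z → w < z →
      InRm G {x, y, z} → InRm G {w, y, z} → InRp G {x, y, w}
  | x6ap {x y q w z : Fin m} : [x, y, q, w, z].Pairwise (· ≠ ·) →
      x < q → y < q → w < q → q < z →
      InRp G {x, y, z} → InRp G {w, q, z} → InRp G {x, y, w}
  | x6am {x y q w z : Fin m} : [x, y, q, w, z].Pairwise (· ≠ ·) →
      x < q → y < q → w < q → q < z →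
      InRm G {x, y, z} → InRm G {w, q, z} → InRp G {x, y, w}
  | x6bp {x y q w z : Fin m} : [x, y, q, w, z].Pairwise (· ≠ ·) →
      x < q → y < q → w < q → q < z →
      InRp G {x, y, z} → InRp G {w, q, z} → InRp G {x, y, q}
  | x6bm {x y q w z : Fin m} : [x, y, q, w, z].Pairwise (· ≠ ·) →
      x < q → y < q → w < q → q < z →
      InRm G {x, y, z} → InRm G {w, q, z} → InRp G {x, y, q}

/-- Membership in the closure set `R⁻` of triples. -/
inductive InRm {m : ℕ} (G : SimpleGraph (Fin m)) : Finset (Fin m) → Prop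
  | x1 {x y z : Fin m} : [x, y, z].Pairwise (· ≠ ·) →
      x < z → y < z →
      InF G {x, z} → InF G {y, z} → InRm G {x, y, z}
  | x3 {x y w z : Fin m} : [x, y, w, z].Pairwise (· ≠ ·) →
      x < z → y < z → w < z → x < w → y < w →
      InF G {w, z} → InRp G {x, y, z} → InRm G {x, y, w}
  | x7a {x y q w z : Fin m} : [x, y, q, w, z].Pairwise (· ≠ ·) →
      x < q → y < q → w < q → q < z →
      InRp G {x, y, z} → InRm G {w, q, z} → InRm G {x, y, q}
  | x7a' {x y q w z : Fin m} : [x, y, q, w, z].Pairwise (· ≠ ·) →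
      x < q → y < q → w < q → q < z →
      InRm G {x, y, z} → InRp G {w, q, z} → InRm G {x, y, q}
  | x7b {x y q w z : Fin m} : [x, y, q, w, z].Pairwise (· ≠ ·) →
      x < q → y < q → w < q → q < z → x < w → y < w →
      InRp G {x, y, z} → InRm G {w, q, z} → InRm G {x, y, w}
  | x7b' {x y q w z : Fin m} : [x, y, q, w, z].Pairwise (· ≠ ·) →
      x < q → y < q → w < q → q < z → x < w → y < w →
      InRm G {x, y, z} → InRp G {w, q, z} → InRm G {x, y, w}
end

/-! At stage `i` of the game (variables `< i` assigned) call a looping walk open if its endpoints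
are assigned and its interior is not, and call the assignment consistent if the endpoints `a`, `b`
of every open walk `Q` are joined in `P_∞` by a walk of length `λ(Q)`, i.e. `|a - b| ≤ λ(Q)` and
`λ(Q) ≡ a - b (mod 2)`. At the end the open walks are exactly the edges of `G`, so consistency is
the homomorphism condition.

The first interior vertex of an open walk to be quantified is its splitting vertex. Among `β`
distinct values for it, one breaks a half of the walk unless the endpoints are joined by a walk of
length `λ(Q)`; this is where the correction `-2 (β - 1)` in `λ` comes from. So the adversary can
keep an inconsistent assignment inconsistent, and a bad walk `u … v` becomes inconsistent as soon
as `v` is chosen. Conversely, without bad walks, the open walks ending at the next variable `v`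
confine its value to intervals of one parity (fixed by a 2-colouring of `G`), and two such walks
glue at `v` into an open walk of the previous stage, so consistency leaves room for `β v` common
values. -/

section Game

variable {m : ℕ} {B : Type*} {β : Fin m → ℕ} {G : SimpleGraph (Fin m)} {E : B → B → Prop}

theorem satFrom_of_invariant (P : ℕ → (Fin m → B) → Prop)
    (step : ∀ i (hi : i < m) f, P i f → ∃ S : Finset B, S.card = β ⟨i, hi⟩ ∧
      ∀ b ∈ S, P (i + 1) (Function.update f ⟨i, hi⟩ b))
    (final : ∀ f, P m f → ∀ u v, G.Adj u v → E (f u) (f v))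
    (i : ℕ) (f : Fin m → B) (hi : i ≤ m) (hP : P i f) : SatFrom β G E i f := by
  rw [SatFrom]
  split_ifs with him
  · obtain ⟨S, hcard, hS⟩ := step i him f hP
    exact ⟨S, hcard, fun b hb => satFrom_of_invariant P step final (i + 1) _ him (hS b hb)⟩
  · exact final f (by rwa [show i = m by omega] at hP)
termination_by m - i

theorem not_satFrom_of_invariant (P : ℕ → (Fin m → B) → Prop)
    (step : ∀ i (hi : i < m) f, P i f → ∀ S : Finset B, S.card = β ⟨i, hi⟩ →
      ∃ b ∈ S, P (i + 1) (Function.update f ⟨i, hi⟩ b))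
    (final : ∀ f, P m f → ¬ ∀ u v, G.Adj u v → E (f u) (f v))
    (i : ℕ) (f : Fin m → B) (hi : i ≤ m) (hP : P i f) : ¬ SatFrom β G E i f := by
  rw [SatFrom]
  split_ifs with him
  · rintro ⟨S, hcard, hS⟩
    obtain ⟨b, hb, hPb⟩ := step i him f hP S hcard
    exact not_satFrom_of_invariant P step final (i + 1) _ him hPb (hS b hb)
  · exact final f (by rwa [show i = m by omega] at hP)
termination_by m - i

end Game

-- `a` and `b` are joined by a walk of length `l` in `P_∞`.
def PathReach (l a b : ℤ) : Prop := |a - b| ≤ l ∧ 2 ∣ l - (a - b)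

section PathReach

theorem pathReach_comm {l a b : ℤ} : PathReach l a b ↔ PathReach l b a := by
  simp only [PathReach, abs_sub_comm a b]
  omega

theorem intPathAdj_iff_pathReach_one {a b : ℤ} : intPathAdj a b ↔ PathReach 1 a b := by
  simp only [intPathAdj, PathReach, abs_le, abs_eq (zero_le_one' ℤ)]
  omega

variable {n : ℕ} {S : Finset ℤ}

theorem exists_mem_not_pathReach (hn : n = 1 ∨ n = 2) (hS : S.card = n) {l : ℤ}
    (hl : l ≤ (n : ℤ) - 2) (a : ℤ) : ∃ b ∈ S, ¬ PathReach l a b := by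
  by_contra! h
  simp only [PathReach, abs_le] at h
  rcases hn with rfl | rfl
  · obtain ⟨b, rfl⟩ := Finset.card_eq_one.mp hS
    have := h b (Finset.mem_singleton_self b)
    omega
  · obtain ⟨b₁, b₂, hne, rfl⟩ := Finset.card_eq_two.mp hS
    have := h b₁ (by simp)
    have := h b₂ (by simp)
    omega

theorem pathReach_of_midpoints (hn : n = 1 ∨ n = 2) (hS : S.card = n) {l₁ l₂ a c : ℤ}
    (h : ∀ b ∈ S, PathReach l₁ a b ∧ PathReach l₂ b c) :
    PathReach (l₁ + l₂ - 2 * ((n : ℤ) - 1)) a c := by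
  simp only [PathReach, abs_le] at h ⊢
  rcases hn with rfl | rfl
  · obtain ⟨b, rfl⟩ := Finset.card_eq_one.mp hS
    have := h b (Finset.mem_singleton_self b)
    omega
  · obtain ⟨b₁, b₂, hne, rfl⟩ := Finset.card_eq_two.mp hS
    have := h b₁ (by simp)
    have := h b₂ (by simp)
    omega

theorem exists_finset_pathReach {ι : Type*} (a l : ι → ℤ) (p : ℤ) (hn : n = 1 ∨ n = 2)
    (hpar : ∀ j, 2 ∣ a j - l j - p) (hgap : ∀ j k, a j - l j + 2 * ((n : ℤ) - 1) ≤ a k + l k) :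
    ∃ S : Finset ℤ, S.card = n ∧ ∀ b ∈ S, 2 ∣ b - p ∧ ∀ j, PathReach (l j) (a j) b := by
  obtain ⟨L, hLp, hL⟩ :
      ∃ L, 2 ∣ L - p ∧ ∀ j, a j - l j ≤ L ∧ L + 2 * ((n : ℤ) - 1) ≤ a j + l j := by
    rcases isEmpty_or_nonempty ι with hι | ⟨⟨j₀⟩⟩
    · exact ⟨p, by simp, isEmptyElim⟩
    · obtain ⟨_, ⟨j, rfl⟩, hmax⟩ :=
        Int.exists_greatest_of_bdd (P := fun t => ∃ j, t = a j - l j)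
          ⟨a j₀ + l j₀, by rintro _ ⟨j, rfl⟩; have := hgap j j₀; omega⟩ ⟨_, j₀, rfl⟩
      exact ⟨a j - l j, hpar j, fun k => ⟨hmax _ ⟨k, rfl⟩, hgap j k⟩⟩
  have hwindow : ∀ b, L ≤ b → b ≤ L + 2 * ((n : ℤ) - 1) → 2 ∣ b - L →
      2 ∣ b - p ∧ ∀ j, PathReach (l j) (a j) b := by
    intro b h₁ h₂ h₃
    refine ⟨by omega, fun j => ?_⟩
    have := hL j
    have := hpar j
    simp only [PathReach, abs_le]
    omega
  rcases hn with rfl | rfl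
  · refine ⟨{L}, Finset.card_singleton L, fun b hb => ?_⟩
    rw [Finset.mem_singleton.mp hb]
    exact hwindow L le_rfl (by simp) (by simp)
  · refine ⟨{L, L + 2}, Finset.card_pair (by omega), fun b hb => ?_⟩
    rcases Finset.mem_insert.mp hb with rfl | hb
    · exact hwindow b le_rfl (by simp) (by simp)
    · rw [Finset.mem_singleton.mp hb]
      exact hwindow _ (by omega) (by simp) (by simp)

end PathReach

-- `LoopingWalk G x M z`: the list `x :: (M ++ [z])` is a looping walk; `M` is its interior.
inductive LoopingWalk {V : Type*} [LT V] (G : SimpleGraph V) : V → List V → V → Prop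
  | edge {x y : V} : G.Adj x y → LoopingWalk G x [] y
  | comb {x y z : V} {M₁ M₂ : List V} :
      LoopingWalk G x M₁ y → LoopingWalk G y M₂ z → x ≠ z →
      (∀ w ∈ M₁ ++ y :: M₂, x < w ∧ z < w) → LoopingWalk G x (M₁ ++ y :: M₂) z

def lamInterior {V : Type*} (β : V → ℕ) (M : List V) : ℤ :=
  (M.length + 1 : ℤ) - 2 * (M.map fun w => (β w : ℤ) - 1).sum

section LoopingWalk

variable {V : Type*} {β : V → ℕ}

@[simp]
theorem lamInterior_nil : lamInterior β [] = 1 := by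
  simp [lamInterior]

theorem lamInterior_append_cons (M₁ M₂ : List V) (y : V) :
    lamInterior β (M₁ ++ y :: M₂) =
      lamInterior β M₁ + lamInterior β M₂ - 2 * ((β y : ℤ) - 1) := by
  simp only [lamInterior, List.length_append, List.length_cons, List.map_append, List.map_cons,
    List.sum_append, List.sum_cons]
  push_cast
  ring

@[simp]
theorem lamInterior_reverse (M : List V) : lamInterior β M.reverse = lamInterior β M := by
  simp [lamInterior, List.sum_reverse]

theorem lamWalk_cons_append {m : ℕ} (β : Fin m → ℕ) (x z : Fin m) (M : List (Fin m)) :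
    lamWalk β (x :: (M ++ [z])) = lamInterior β M := by
  simp [lamWalk, lamInterior]

variable [LinearOrder V] {G : SimpleGraph V} {x z : V} {M : List V}

namespace LoopingWalk

theorem ne (h : LoopingWalk G x M z) : x ≠ z := by
  cases h with
  | edge h => exact h.ne
  | comb _ _ hxz _ => exact hxz

theorem lt_of_mem (h : LoopingWalk G x M z) {w : V} (hw : w ∈ M) : x < w ∧ z < w := by
  cases h with
  | edge _ => simp at hw
  | comb _ _ _ hlt => exact hlt w hw

theorem adj_of_eq_nil (h : LoopingWalk G x M z) (hM : M = []) : G.Adj x z := by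
  cases h with
  | edge h => exact h
  | comb _ _ _ _ => simp at hM

theorem reverse (h : LoopingWalk G x M z) : LoopingWalk G z M.reverse x := by
  induction h with
  | edge h => exact .edge h.symm
  | comb _ _ hxz hlt ih₁ ih₂ =>
    simpa using LoopingWalk.comb ih₂ ih₁ hxz.symm fun w hw => (hlt w (by
      simp only [List.mem_append, List.mem_cons, List.mem_reverse] at hw ⊢; tauto)).symm

theorem split_of_mem (h : LoopingWalk G x M z) {y : V} (hy : y ∈ M) (hmin : ∀ w ∈ M, y ≤ w) :
    ∃ M₁ M₂, M = M₁ ++ y :: M₂ ∧ LoopingWalk G x M₁ y ∧ LoopingWalk G y M₂ z := by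
  cases h with
  | edge _ => simp at hy
  | @comb _ y' _ M₁ M₂ h₁ h₂ _ _ =>
    obtain rfl : y = y' := by
      rcases List.mem_append.mp hy with hy | hy
      · exact absurd (hmin y' (by simp)) (not_le.mpr (h₁.lt_of_mem hy).2)
      · rcases List.mem_cons.mp hy with rfl | hy
        · rfl
        · exact absurd (hmin y' (by simp)) (not_le.mpr (h₂.lt_of_mem hy).1)
    exact ⟨M₁, M₂, rfl, h₁, h₂⟩

theorem two_dvd_sub_add_lamInterior {κ : V → ℤ} (hκ : ∀ u v, G.Adj u v → ¬ 2 ∣ κ u - κ v)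
    (h : LoopingWalk G x M z) : 2 ∣ κ x - κ z + lamInterior β M := by
  induction h with
  | edge h => have := hκ _ _ h; simp only [lamInterior_nil]; omega
  | comb _ _ _ _ ih₁ ih₂ => rw [lamInterior_append_cons]; omega

end LoopingWalk

end LoopingWalk

section Translation

variable {m : ℕ} {β : Fin m → ℕ} {G : SimpleGraph (Fin m)}

theorem isLoopingWalk_iff {Q : List (Fin m)} :
    IsLoopingWalk G Q ↔ ∃ x M z, Q = x :: (M ++ [z]) ∧ LoopingWalk G x M z := by
  constructor
  · intro h
    induction h with
    | base h => exact ⟨_, [], _, rfl, .edge h⟩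
    | comb _ _ hxz hlt ih₁ ih₂ =>
      obtain ⟨_, _, _, e₁, h₁⟩ := ih₁
      obtain ⟨_, _, _, e₂, h₂⟩ := ih₂
      simp only [List.cons.injEq] at e₁ e₂
      obtain ⟨rfl, rfl, rfl⟩ : _ ∧ _ ∧ _ := ⟨e₁.1, (List.append_inj' e₁.2 rfl).1,
        List.singleton_inj.mp (List.append_inj' e₁.2 rfl).2⟩
      obtain ⟨rfl, rfl, rfl⟩ : _ ∧ _ ∧ _ := ⟨e₂.1, (List.append_inj' e₂.2 rfl).1,
        List.singleton_inj.mp (List.append_inj' e₂.2 rfl).2⟩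
      exact ⟨_, _, _, rfl, .comb h₁ h₂ hxz hlt⟩
  · rintro ⟨x, M, z, rfl, h⟩
    induction h with
    | edge h => exact .base h
    | comb _ _ hxz hlt ih₁ ih₂ => exact .comb ih₁ ih₂ hxz hlt

theorem exists_badWalk_iff :
    (∃ (Q : List (Fin m)) (u v : Fin m), IsLoopingWalk G Q ∧
        Q.head? = some u ∧ Q.getLast? = some v ∧ u < v ∧ lamWalk β Q ≤ (β v : ℤ) - 2) ↔
      ∃ x M z, LoopingWalk G x M z ∧ x < z ∧ lamInterior β M ≤ (β z : ℤ) - 2 := by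
  simp only [isLoopingWalk_iff]
  constructor
  · rintro ⟨_, u, v, ⟨x, M, z, rfl, h⟩, hu, hv, huv, hlam⟩
    rw [List.head?_cons, Option.some_inj] at hu
    rw [← List.cons_append, List.getLast?_concat, Option.some_inj] at hv
    subst hu hv
    exact ⟨x, M, z, h, huv, by rwa [lamWalk_cons_append] at hlam⟩
  · rintro ⟨x, M, z, h, hxz, hlam⟩
    exact ⟨_, x, z, ⟨x, M, z, rfl, h⟩, rfl,
      by rw [← List.cons_append, List.getLast?_concat], hxz, by rwa [lamWalk_cons_append]⟩

end Translation

theorem Bipartite.exists_parity {V : Type*} {G : SimpleGraph V} (h : Bipartite G) :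
    ∃ κ : V → ℤ, ∀ u v, G.Adj u v → ¬ 2 ∣ κ u - κ v := by
  obtain ⟨c, hc⟩ := h
  refine ⟨fun u => (c u).toNat, fun u v huv => ?_⟩
  have := hc u v huv
  revert this
  change c u ≠ c v → ¬ 2 ∣ ((c u).toNat : ℤ) - (c v).toNat
  cases c u <;> cases c v <;> decide

section Stage

variable {m : ℕ} {β : Fin m → ℕ} {G : SimpleGraph (Fin m)} {i : ℕ} {f : Fin m → ℤ}

def OpenWalk (G : SimpleGraph (Fin m)) (i : ℕ) (x : Fin m) (M : List (Fin m)) (z : Fin m) :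
    Prop :=
  LoopingWalk G x M z ∧ (x : ℕ) < i ∧ (z : ℕ) < i ∧ ∀ w ∈ M, i ≤ (w : ℕ)

def Consistent (β : Fin m → ℕ) (G : SimpleGraph (Fin m)) (i : ℕ) (f : Fin m → ℤ) : Prop :=
  ∀ x M z, OpenWalk G i x M z → PathReach (lamInterior β M) (f x) (f z)

theorem OpenWalk.reverse {x z : Fin m} {M : List (Fin m)} (h : OpenWalk G i x M z) :
    OpenWalk G i z M.reverse x :=
  ⟨h.1.reverse, h.2.2.1, h.2.1, fun w hw => h.2.2.2 w (List.mem_reverse.mp hw)⟩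

theorem consistent_zero (f : Fin m → ℤ) : Consistent β G 0 f :=
  fun _ _ _ h => absurd h.2.1 (Nat.not_lt_zero _)

theorem consistent_last_iff :
    Consistent β G m f ↔ ∀ u v, G.Adj u v → intPathAdj (f u) (f v) := by
  constructor
  · intro h u v huv
    simpa [intPathAdj_iff_pathReach_one] using h u [] v ⟨.edge huv, u.2, v.2, by simp⟩
  · rintro h x M z ⟨hw, -, -, hM⟩
    obtain rfl : M = [] := List.eq_nil_iff_forall_not_mem.mpr fun w hw => by
      have := hM w hw; omega
    simpa [intPathAdj_iff_pathReach_one] using h x z (hw.adj_of_eq_nil rfl)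

theorem exists_mem_not_consistent_update (hβ : ∀ v, β v = 1 ∨ β v = 2) (hi : i < m)
    (hf : ¬ Consistent β G i f) {S : Finset ℤ} (hS : S.card = β ⟨i, hi⟩) :
    ∃ b ∈ S, ¬ Consistent β G (i + 1) (Function.update f ⟨i, hi⟩ b) := by
  have hv : ((⟨i, hi⟩ : Fin m) : ℕ) = i := rfl
  unfold Consistent at hf ⊢
  push Not at hf ⊢
  obtain ⟨x, M, z, ⟨hw, hx, hz, hM⟩, hbad⟩ := hf
  have hxv : x ≠ ⟨i, hi⟩ := Fin.ne_of_val_ne (by omega)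
  have hzv : z ≠ ⟨i, hi⟩ := Fin.ne_of_val_ne (by omega)
  by_cases hvM : ⟨i, hi⟩ ∈ M
  · obtain ⟨M₁, M₂, rfl, h₁, h₂⟩ :=
      hw.split_of_mem hvM fun w hw => Fin.mk_le_of_le_val (hM w hw)
    rw [lamInterior_append_cons] at hbad
    obtain ⟨b, hb, hbad'⟩ : ∃ b ∈ S, ¬ PathReach (lamInterior β M₁) (f x) b ∨
        ¬ PathReach (lamInterior β M₂) b (f z) := by
      by_contra! h
      exact hbad (pathReach_of_midpoints (hβ _) hS h)
    refine ⟨b, hb, ?_⟩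
    rcases hbad' with hbad' | hbad'
    · refine ⟨x, M₁, ⟨i, hi⟩, ⟨h₁, by omega, by simp, fun w hw => ?_⟩, ?_⟩
      · have := (h₁.lt_of_mem hw).2; omega
      · rwa [Function.update_of_ne hxv, Function.update_self]
    · refine ⟨⟨i, hi⟩, M₂, z, ⟨h₂, by simp, by omega, fun w hw => ?_⟩, ?_⟩
      · have := (h₂.lt_of_mem hw).1; omega
      · rwa [Function.update_of_ne hzv, Function.update_self]
  · obtain ⟨b, hb⟩ : S.Nonempty :=
      Finset.card_pos.mp (by rcases hβ ⟨i, hi⟩ with h | h <;> omega)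
    refine ⟨b, hb, x, M, z, ⟨hw, by omega, by omega, fun w hw => ?_⟩, ?_⟩
    · have := hM w hw
      have : w ≠ ⟨i, hi⟩ := fun h => hvM (h ▸ hw)
      have := Fin.val_ne_of_ne this
      omega
    · rwa [Function.update_of_ne hxv, Function.update_of_ne hzv]

theorem not_sat_of_badWalk (hβ : ∀ v, β v = 1 ∨ β v = 2) {u v : Fin m} {M : List (Fin m)}
    (hw : LoopingWalk G u M v) (huv : u < v) (hlam : lamInterior β M ≤ (β v : ℤ) - 2) :
    ¬ Sat β G intPathAdj := by
  intro hsat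
  refine not_satFrom_of_invariant (fun i f => i ≤ v ∨ ¬ Consistent β G i f) ?_ ?_
    0 (fun _ => 0) (Nat.zero_le m) (Or.inl (Nat.zero_le _)) (hsat _)
  · rintro i hi f (hiv | hf) S hS
    · rcases hiv.lt_or_eq with hiv | hiv
      · obtain ⟨b, hb⟩ : S.Nonempty :=
          Finset.card_pos.mp (by rcases hβ ⟨i, hi⟩ with h | h <;> omega)
        exact ⟨b, hb, Or.inl hiv⟩
      · obtain rfl : v = ⟨i, hi⟩ := Fin.ext hiv.symm
        obtain ⟨b, hb, hbad⟩ := exists_mem_not_pathReach (hβ _) hS hlam (f u)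
        refine ⟨b, hb, Or.inr fun hc => hbad ?_⟩
        have hopen : OpenWalk G (i + 1) u M ⟨i, hi⟩ :=
          ⟨hw, by omega, by simp, fun w hw' => by have := (hw.lt_of_mem hw').2; omega⟩
        simpa [Function.update_of_ne hw.ne] using hc u M _ hopen
    · obtain ⟨b, hb, h⟩ := exists_mem_not_consistent_update hβ hi hf hS
      exact ⟨b, hb, Or.inr h⟩
  · rintro f (hmv | hf)
    · exact absurd v.2 (by omega)
    · rwa [consistent_last_iff] at hf

theorem Consistent.update (hi : i < m) (hf : Consistent β G i f) {b : ℤ}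
    (hb : ∀ u M, OpenWalk G (i + 1) u M ⟨i, hi⟩ → PathReach (lamInterior β M) (f u) b) :
    Consistent β G (i + 1) (Function.update f ⟨i, hi⟩ b) := by
  have hv : ((⟨i, hi⟩ : Fin m) : ℕ) = i := rfl
  intro x M z hopen
  have ⟨hw, hx, hz, hM⟩ := hopen
  by_cases hxv : x = ⟨i, hi⟩ <;> by_cases hzv : z = ⟨i, hi⟩
  · exact absurd (hxv.trans hzv.symm) hw.ne
  · subst hxv
    rw [Function.update_self, Function.update_of_ne hzv, pathReach_comm, ← lamInterior_reverse]
    exact hb z M.reverse hopen.reverse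
  · subst hzv
    rw [Function.update_self, Function.update_of_ne hxv]
    exact hb x M hopen
  · rw [Function.update_of_ne hxv, Function.update_of_ne hzv]
    have := Fin.val_ne_of_ne hxv
    have := Fin.val_ne_of_ne hzv
    exact hf x M z ⟨hw, by omega, by omega, fun w hw => by have := hM w hw; omega⟩

theorem Consistent.gap
    (hgood : ∀ x M z, LoopingWalk G x M z → x < z → (β z : ℤ) - 1 ≤ lamInterior β M)
    (hf : Consistent β G i f) (hi : i < m) {u₀ u₁ : Fin m} {M₀ M₁ : List (Fin m)}
    (h₀ : OpenWalk G (i + 1) u₀ M₀ ⟨i, hi⟩) (h₁ : OpenWalk G (i + 1) u₁ M₁ ⟨i, hi⟩) :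
    f u₀ - lamInterior β M₀ + 2 * ((β ⟨i, hi⟩ : ℤ) - 1) ≤ f u₁ + lamInterior β M₁ := by
  have hv : ((⟨i, hi⟩ : Fin m) : ℕ) = i := rfl
  have hu₀ := Fin.val_ne_of_ne h₀.1.ne
  have hu₁ := Fin.val_ne_of_ne h₁.1.ne
  have := h₀.2.1
  have := h₁.2.1
  by_cases hu : u₀ = u₁
  · subst hu
    have := hgood _ _ _ h₀.1 (by omega)
    have := hgood _ _ _ h₁.1 (by omega)
    omega
  · have hge : ∀ w ∈ M₀ ++ ⟨i, hi⟩ :: M₁.reverse, i ≤ (w : ℕ) := by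
      intro w hw
      simp only [List.mem_append, List.mem_cons, List.mem_reverse] at hw
      rcases hw with hw | rfl | hw
      · have := h₀.2.2.2 w hw; omega
      · omega
      · have := h₁.2.2.2 w hw; omega
    have hglued : OpenWalk G i u₀ (M₀ ++ ⟨i, hi⟩ :: M₁.reverse) u₁ :=
      ⟨.comb h₀.1 h₁.1.reverse hu fun w hw => by have := hge w hw; omega,
        by omega, by omega, hge⟩
    obtain ⟨habs, -⟩ := hf _ _ _ hglued
    rw [lamInterior_append_cons, lamInterior_reverse, abs_le] at habs
    omega

theorem exists_consistent_extension (hβ : ∀ v, β v = 1 ∨ β v = 2) {κ : Fin m → ℤ}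
    (hκ : ∀ u v, G.Adj u v → ¬ 2 ∣ κ u - κ v)
    (hgood : ∀ x M z, LoopingWalk G x M z → x < z → (β z : ℤ) - 1 ≤ lamInterior β M)
    (hi : i < m) (hpar : ∀ u : Fin m, (u : ℕ) < i → 2 ∣ f u - κ u) (hf : Consistent β G i f) :
    ∃ S : Finset ℤ, S.card = β ⟨i, hi⟩ ∧ ∀ b ∈ S,
      (∀ u : Fin m, (u : ℕ) < i + 1 → 2 ∣ Function.update f ⟨i, hi⟩ b u - κ u) ∧
        Consistent β G (i + 1) (Function.update f ⟨i, hi⟩ b) := by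
  have hv : ((⟨i, hi⟩ : Fin m) : ℕ) = i := rfl
  let ι := {p : Fin m × List (Fin m) // OpenWalk G (i + 1) p.1 p.2 ⟨i, hi⟩}
  have hpar' (p : ι) : 2 ∣ f p.1.1 - lamInterior β p.1.2 - κ ⟨i, hi⟩ := by
    have := Fin.val_ne_of_ne p.2.1.ne
    have := hpar p.1.1 (by have := p.2.2.1; omega)
    have := p.2.1.two_dvd_sub_add_lamInterior (β := β) hκ
    omega
  obtain ⟨S, hcard, hS⟩ := exists_finset_pathReach (fun p : ι => f p.1.1)
    (fun p => lamInterior β p.1.2) (κ ⟨i, hi⟩) (hβ _) hpar' fun p q => hf.gap hgood hi p.2 q.2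
  refine ⟨S, hcard, fun b hb =>
    ⟨fun u hu => ?_, hf.update hi fun u M h => (hS b hb).2 ⟨(u, M), h⟩⟩⟩
  by_cases huv : u = ⟨i, hi⟩
  · subst huv
    rw [Function.update_self]
    exact (hS b hb).1
  · rw [Function.update_of_ne huv]
    have := Fin.val_ne_of_ne huv
    exact hpar u (by omega)

theorem sat_of_forall_le_lamInterior (hβ : ∀ v, β v = 1 ∨ β v = 2) {κ : Fin m → ℤ}
    (hκ : ∀ u v, G.Adj u v → ¬ 2 ∣ κ u - κ v)
    (hgood : ∀ x M z, LoopingWalk G x M z → x < z → (β z : ℤ) - 1 ≤ lamInterior β M) :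
    Sat β G intPathAdj := fun f =>
  satFrom_of_invariant
    (fun i f => (∀ u : Fin m, (u : ℕ) < i → 2 ∣ f u - κ u) ∧ Consistent β G i f)
    (fun _ hi _ hP => exists_consistent_extension hβ hκ hgood hi hP.1 hP.2)
    (fun _ hP => consistent_last_iff.mp hP.2) 0 f (Nat.zero_le m)
    ⟨fun _ hu => absurd hu (Nat.not_lt_zero _), consistent_zero f⟩

end Stage

/-- Let `Ψ` be an instance of `{1,2}`-CSP whose constraint graph `G` is
bipartite.  Then `P_∞ ⊨ Ψ` if and only if `G` contains no bad walk, i.e. no looping walk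
`Q = x₁,…,x_r` with `x₁ ≺ x_r` and `λ(Q) ≤ β(x_r) − 2`. -/
theorem infinitePath_sat_iff_no_bad_walk {m : ℕ} (β : Fin m → ℕ)
    (hβ : ∀ v, β v = 1 ∨ β v = 2) (G : SimpleGraph (Fin m)) (hbip : Bipartite G) :
    Sat β G intPathAdj ↔
      ¬ ∃ (Q : List (Fin m)) (u v : Fin m), IsLoopingWalk G Q ∧
        Q.head? = some u ∧ Q.getLast? = some v ∧ u < v ∧
        lamWalk β Q ≤ (β v : ℤ) - 2 := by
  rw [exists_badWalk_iff]
  constructor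
  · rintro hsat ⟨x, M, z, hw, hxz, hlam⟩
    exact not_sat_of_badWalk hβ hw hxz hlam hsat
  · intro hnone
    obtain ⟨κ, hκ⟩ := hbip.exists_parity
    refine sat_of_forall_le_lamInterior hβ hκ fun x M z hw hxz => ?_
    by_contra! hlam
    exact hnone ⟨x, M, z, hw, hxz, by omega⟩

end CountingCSP
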